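/- Let C = ⟨(1+2v²)f₁, (2v+2v²)f₂, (v+2v²)f₃⟩ be a cyclic (respectively negacyclic) code of length n over R, where fᵢ is the generator polynomial of the associated ternary cyclic (negacyclic) code Cᵢ, a monic divisor of xⁿ−1 (respectively xⁿ+1) in Z₃[x]. Then C^⊥ ⊆ C if and only if xⁿ−1 ≡ 0 (mod fᵢ·fᵢ*) (respectively xⁿ+1 ≡ 0 (mod fᵢ·fᵢ*)) for i = 1, 2, 3, where fᵢ* is the reciprocal polynomial of fᵢ. Equivalently, C^⊥ ⊆ C if and only if Cᵢ^⊥ ⊆ Cᵢ for i = 1, 2, 3. -/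

import Mathlib

/-- The ring `R = Z₃ + vZ₃ + v²Z₃ = Z₃[v]/(v³ - v)`, with elements written
`a + v*b + v²*c` for `a b c : ZMod 3` (stored as the three coordinates). -/
@[ext]
structure R3 : Type where
  a : ZMod 3
  b : ZMod 3
  c : ZMod 3
  deriving DecidableEq

namespace R3

instance : Zero R3 := ⟨⟨0, 0, 0⟩⟩
instance : One R3 := ⟨⟨1, 0, 0⟩⟩
instance : Add R3 := ⟨fun x y => ⟨x.a + y.a, x.b + y.b, x.c + y.c⟩⟩
instance : Neg R3 := ⟨fun x => ⟨-x.a, -x.b, -x.c⟩⟩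
/-- Multiplication induced by `v³ = v` :
`(a+vb+v²c)(a'+vb'+v²c') = aa' + v(ab'+a'b+bc'+b'c) + v²(ac'+a'c+bb'+cc')`. -/
instance : Mul R3 := ⟨fun x y =>
  ⟨x.a * y.a,
   x.a * y.b + x.b * y.a + x.b * y.c + x.c * y.b,
   x.a * y.c + x.c * y.a + x.b * y.b + x.c * y.c⟩⟩

@[simp] lemma zero_a : (0 : R3).a = 0 := rfl
@[simp] lemma zero_b : (0 : R3).b = 0 := rfl
@[simp] lemma zero_c : (0 : R3).c = 0 := rfl
@[simp] lemma one_a : (1 : R3).a = 1 := rfl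
@[simp] lemma one_b : (1 : R3).b = 0 := rfl
@[simp] lemma one_c : (1 : R3).c = 0 := rfl
@[simp] lemma add_a (x y : R3) : (x + y).a = x.a + y.a := rfl
@[simp] lemma add_b (x y : R3) : (x + y).b = x.b + y.b := rfl
@[simp] lemma add_c (x y : R3) : (x + y).c = x.c + y.c := rfl
@[simp] lemma neg_a (x : R3) : (-x).a = -x.a := rfl
@[simp] lemma neg_b (x : R3) : (-x).b = -x.b := rfl
@[simp] lemma neg_c (x : R3) : (-x).c = -x.c := rfl
@[simp] lemma mul_a (x y : R3) : (x * y).a = x.a * y.a := rfl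
@[simp] lemma mul_b (x y : R3) :
    (x * y).b = x.a * y.b + x.b * y.a + x.b * y.c + x.c * y.b := rfl
@[simp] lemma mul_c (x y : R3) :
    (x * y).c = x.a * y.c + x.c * y.a + x.b * y.b + x.c * y.c := rfl

private lemma thm_add_assoc (x y z : R3) : x + y + z = x + (y + z) := by ext <;> simp <;> ring
private lemma thm_zero_add (x : R3) : 0 + x = x := by ext <;> simp
private lemma thm_add_zero (x : R3) : x + 0 = x := by ext <;> simp
private lemma thm_add_comm (x y : R3) : x + y = y + x := by ext <;> simp <;> ring
private lemma thm_mul_assoc (x y z : R3) : x * y * z = x * (y * z) := by ext <;> simp <;> ring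
private lemma thm_one_mul (x : R3) : 1 * x = x := by ext <;> simp
private lemma thm_mul_one (x : R3) : x * 1 = x := by ext <;> simp
private lemma thm_left_distrib (x y z : R3) : x * (y + z) = x * y + x * z := by ext <;> simp <;> ring
private lemma thm_right_distrib (x y z : R3) : (x + y) * z = x * z + y * z := by ext <;> simp <;> ring
private lemma thm_mul_comm (x y : R3) : x * y = y * x := by ext <;> simp <;> ring
private lemma thm_zero_mul (x : R3) : 0 * x = 0 := by ext <;> simp
private lemma thm_mul_zero (x : R3) : x * 0 = 0 := by ext <;> simp
private lemma thm_neg_add_cancel (x : R3) : -x + x = 0 := by ext <;> simp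

instance : CommRing R3 where
  nsmul m x := ⟨m • x.a, m • x.b, m • x.c⟩
  nsmul_zero x := by ext <;> exact zero_nsmul (_ : ZMod 3)
  nsmul_succ m x := by ext <;> exact succ_nsmul (_ : ZMod 3) m
  zsmul m x := ⟨m • x.a, m • x.b, m • x.c⟩
  zsmul_zero' x := by ext <;> exact zero_zsmul (_ : ZMod 3)
  zsmul_succ' m x := by ext <;> exact SubNegMonoid.zsmul_succ' m (_ : ZMod 3)
  zsmul_neg' m x := by ext <;> exact SubNegMonoid.zsmul_neg' m (_ : ZMod 3)
  add_assoc := thm_add_assoc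
  zero_add := thm_zero_add
  add_zero := thm_add_zero
  add_comm := thm_add_comm
  mul_assoc := thm_mul_assoc
  one_mul := thm_one_mul
  mul_one := thm_mul_one
  left_distrib := thm_left_distrib
  right_distrib := thm_right_distrib
  mul_comm := thm_mul_comm
  zero_mul := thm_zero_mul
  mul_zero := thm_mul_zero
  neg_add_cancel := thm_neg_add_cancel

/-- The element `v` of `R = Z₃[v]/(v³-v)`. -/
def v : R3 := ⟨0, 1, 0⟩

/-- The natural inclusion `Z₃ → R`. -/
def iota : ZMod 3 →+* R3 where
  toFun t := ⟨t, 0, 0⟩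
  map_one' := by ext <;> simp
  map_mul' x y := by ext <;> simp
  map_zero' := by ext <;> simp
  map_add' x y := by ext <;> simp

instance : Algebra (ZMod 3) R3 := iota.toAlgebra

end R3

open R3 in
/-- The Gray map `φ : R → Z₃³`, `φ(a+vb+v²c) = (a, a+b+c, a+2b+c)`. -/
def gray (r : R3) : ZMod 3 × ZMod 3 × ZMod 3 :=
  (r.a, r.a + r.b + r.c, r.a + 2 * r.b + r.c)

/-- The Gray map extended blockwise to `φ : R^n → Z₃^{3n}`, where `Z₃^{3n}` is
identified with `Z₃^n × Z₃^n × Z₃^n` via the three length-`n` blocks. -/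
def grayV {n : ℕ} (r : Fin n → R3) :
    (Fin n → ZMod 3) × (Fin n → ZMod 3) × (Fin n → ZMod 3) :=
  (fun i => (r i).a,
   fun i => (r i).a + (r i).b + (r i).c,
   fun i => (r i).a + 2 * (r i).b + (r i).c)

/-- Hamming weight on `Z₃^{3n} = Z₃^n × Z₃^n × Z₃^n`. -/
def wtH {n : ℕ} (x : (Fin n → ZMod 3) × (Fin n → ZMod 3) × (Fin n → ZMod 3)) : ℕ :=
  hammingNorm x.1 + hammingNorm x.2.1 + hammingNorm x.2.2

/-- The Lee weight of an element of `R`: the Hamming weight of its Gray image. -/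
def wtLee (r : R3) : ℕ :=
  (if r.a ≠ 0 then 1 else 0) + (if r.a + r.b + r.c ≠ 0 then 1 else 0) +
    (if r.a + 2 * r.b + r.c ≠ 0 then 1 else 0)

/-- The Lee weight on `R^n`, extended additively. -/
def wtLeeV {n : ℕ} (x : Fin n → R3) : ℕ := ∑ i, wtLee (x i)

/-- The cyclic shift `σ(c₀,…,c_{n-1}) = (c_{n-1},c₀,…,c_{n-2})`. -/
def cyc {α : Type*} {n : ℕ} [NeZero n] (c : Fin n → α) : Fin n → α :=
  fun i => c (i - 1)

/-- The negacyclic shift `η(c₀,…,c_{n-1}) = (-c_{n-1},c₀,…,c_{n-2})`. -/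
def nega {α : Type*} [Neg α] {n : ℕ} [NeZero n] (c : Fin n → α) : Fin n → α :=
  fun i => if i = 0 then -c (i - 1) else c (i - 1)

/-- The `λ`-constacyclic shift `(c₀,…,c_{n-1}) ↦ (λc_{n-1},c₀,…,c_{n-2})`. -/
def consta {α : Type*} [Mul α] {n : ℕ} [NeZero n] (lam : α) (c : Fin n → α) : Fin n → α :=
  fun i => if i = 0 then lam * c (i - 1) else c (i - 1)

open Fin.NatCast in
/-- The quasi-cyclic shift `τ_{s,l}` of block length `l` on vectors of length `n = s*l`,
moving the last block of `l` coordinates to the front; equivalently, the cyclic shift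
by `l` positions. -/
def shiftBy {α : Type*} {n : ℕ} [NeZero n] (l : ℕ) (c : Fin n → α) : Fin n → α :=
  fun i => c (i - (l : Fin n))

/-- Apply a map to each of the three blocks of `Z₃^{3n} = Z₃^n × Z₃^n × Z₃^n`. -/
def blockMap {n : ℕ} (f : (Fin n → ZMod 3) → (Fin n → ZMod 3))
    (x : (Fin n → ZMod 3) × (Fin n → ZMod 3) × (Fin n → ZMod 3)) :
    (Fin n → ZMod 3) × (Fin n → ZMod 3) × (Fin n → ZMod 3) :=
  (f x.1, f x.2.1, f x.2.2)

/-- The Euclidean dual of a linear code over `R`. -/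
def dualR {n : ℕ} (C : Submodule R3 (Fin n → R3)) : Submodule R3 (Fin n → R3) where
  carrier := {x | ∀ y ∈ C, ∑ i, x i * y i = 0}
  add_mem' := by
    intro p q hp hq y hy
    simp only [Set.mem_setOf_eq] at *
    simp [Pi.add_apply, add_mul, Finset.sum_add_distrib, hp y hy, hq y hy]
  zero_mem' := by intro y hy; simp
  smul_mem' := by
    intro r p hp y hy
    simp only [Set.mem_setOf_eq] at *
    simp [Pi.smul_apply, smul_eq_mul, mul_assoc, ← Finset.mul_sum, hp y hy]

/-- The Euclidean dual of a ternary linear code. -/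
def dualZ {n : ℕ} (C : Submodule (ZMod 3) (Fin n → ZMod 3)) :
    Submodule (ZMod 3) (Fin n → ZMod 3) where
  carrier := {x | ∀ y ∈ C, ∑ i, x i * y i = 0}
  add_mem' := by
    intro p q hp hq y hy
    simp only [Set.mem_setOf_eq] at *
    simp [Pi.add_apply, add_mul, Finset.sum_add_distrib, hp y hy, hq y hy]
  zero_mem' := by intro y hy; simp
  smul_mem' := by
    intro r p hp y hy
    simp only [Set.mem_setOf_eq] at *
    simp [Pi.smul_apply, smul_eq_mul, mul_assoc, ← Finset.mul_sum, hp y hy]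

/-- The Euclidean inner product on `Z₃^{3n} = Z₃^n × Z₃^n × Z₃^n`. -/
def inner3 {n : ℕ} (x y : (Fin n → ZMod 3) × (Fin n → ZMod 3) × (Fin n → ZMod 3)) : ZMod 3 :=
  ∑ i, x.1 i * y.1 i + ∑ i, x.2.1 i * y.2.1 i + ∑ i, x.2.2 i * y.2.2 i

/-- The Euclidean dual (as a set) of a subset of `Z₃^{3n}`. -/
def dual3Set {n : ℕ} (S : Set ((Fin n → ZMod 3) × (Fin n → ZMod 3) × (Fin n → ZMod 3))) :
    Set ((Fin n → ZMod 3) × (Fin n → ZMod 3) × (Fin n → ZMod 3)) :=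
  {x | ∀ y ∈ S, inner3 x y = 0}

/-- The first associated ternary code `C₁ = {a : ∃ b c, a+vb+v²c ∈ C}`. -/
def assoc1 {n : ℕ} (C : Set (Fin n → R3)) : Set (Fin n → ZMod 3) :=
  {x | ∃ r ∈ C, ∀ i, x i = (r i).a}

/-- The second associated ternary code `C₂ = {a+b+c : a+vb+v²c ∈ C}`. -/
def assoc2 {n : ℕ} (C : Set (Fin n → R3)) : Set (Fin n → ZMod 3) :=
  {x | ∃ r ∈ C, ∀ i, x i = (r i).a + (r i).b + (r i).c}

/-- The third associated ternary code `C₃ = {a+2b+c : a+vb+v²c ∈ C}`. -/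
def assoc3 {n : ℕ} (C : Set (Fin n → R3)) : Set (Fin n → ZMod 3) :=
  {x | ∃ r ∈ C, ∀ i, x i = (r i).a + 2 * (r i).b + (r i).c}

/-- The idempotent `e₁ = 1 + 2v²` of `R`. -/
noncomputable def e1 : R3 := 1 + 2 * R3.v ^ 2
/-- The idempotent `e₂ = 2v + 2v²` of `R`. -/
noncomputable def e2 : R3 := 2 * R3.v + 2 * R3.v ^ 2
/-- The idempotent `e₃ = v + 2v²` of `R`. -/
noncomputable def e3 : R3 := R3.v + 2 * R3.v ^ 2

/-- Coordinatewise inclusion `Z₃^n → R^n`. -/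
def emb {n : ℕ} (x : Fin n → ZMod 3) : Fin n → R3 := fun i => R3.iota (x i)

/-- The code `(1+2v²)C₁ ⊕ (2v+2v²)C₂ ⊕ (v+2v²)C₃ ⊆ R^n` built from three
ternary codes `C₁, C₂, C₃ ⊆ Z₃^n`. -/
def tri {n : ℕ} (C₁ C₂ C₃ : Set (Fin n → ZMod 3)) : Set (Fin n → R3) :=
  {w | ∃ x ∈ C₁, ∃ y ∈ C₂, ∃ z ∈ C₃, w = e1 • emb x + e2 • emb y + e3 • emb z}

open Polynomial in
/-- The polynomial representation `(c₀,…,c_{n-1}) ↦ c₀ + c₁x + … + c_{n-1}x^{n-1}`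
of a vector over `Z₃`. -/
noncomputable def toPolyZ {n : ℕ} (c : Fin n → ZMod 3) : Polynomial (ZMod 3) :=
  ∑ i : Fin n, Polynomial.C (c i) * Polynomial.X ^ (i : ℕ)

open Polynomial in
/-- The polynomial representation of a vector over `R`. -/
noncomputable def toPolyR {n : ℕ} (c : Fin n → R3) : Polynomial R3 :=
  ∑ i : Fin n, Polynomial.C (c i) * Polynomial.X ^ (i : ℕ)

/-- The quotient map `Z₃[x] → Z₃[x]/(xⁿ - ε)`. -/
noncomputable def mkZ (n : ℕ) (ε : ZMod 3) :
    Polynomial (ZMod 3) →+*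
      Polynomial (ZMod 3) ⧸ Ideal.span {Polynomial.X ^ n - Polynomial.C ε} :=
  Ideal.Quotient.mk _

/-- The quotient map `R[x] → R[x]/(xⁿ - ε)`. -/
noncomputable def mkR (n : ℕ) (ε : R3) :
    Polynomial R3 →+* Polynomial R3 ⧸ Ideal.span {Polynomial.X ^ n - Polynomial.C ε} :=
  Ideal.Quotient.mk _

/-- `f` is the generator polynomial of the ternary cyclic (`ε = 1`) resp. negacyclic
(`ε = -1`) code `D` of length `n`: `f` is a monic divisor of `xⁿ - ε` and, under the
polynomial representation, `D` corresponds exactly to the ideal of `Z₃[x]/(xⁿ - ε)`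
generated by `f`. -/
def IsGenPolyZ (n : ℕ) (ε : ZMod 3) (D : Set (Fin n → ZMod 3))
    (f : Polynomial (ZMod 3)) : Prop :=
  f.Monic ∧ f ∣ (Polynomial.X ^ n - Polynomial.C ε) ∧
    {p | ∃ c ∈ D, p = mkZ n ε (toPolyZ c)} = ↑(Ideal.span {mkZ n ε f})

/-!
Evaluation at `v = 0, 1, -1` gives ring maps `proj₁, proj₂, proj₃ : R → Z₃` that together form
the Chinese-remainder isomorphism `R ≅ Z₃³`, with primitive idempotents `1 + 2v²`, `2v + 2v²`,
`v + 2v²`. They split the inner product of `Rⁿ` into three ternary inner products, so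
`C^⊥ = e₁C₁^⊥ ⊕ e₂C₂^⊥ ⊕ e₃C₃^⊥`, and `C^⊥ ⊆ C` exactly when `Cᵢ^⊥ ⊆ Cᵢ` for each `i`.

For a ternary code `D = ⟨f⟩` with `f h = xⁿ - ε`, a word `x` lies in `D^⊥` iff the coefficients
of `x f*` in degrees `deg f, …, n - 1` vanish. The reflected cofactor `x^(n-1) h(1/x)` passes this
test, so `D^⊥ ⊆ D` forces `f ∣ x^(n-1) h(1/x)`; reversing (`h(0) ≠ 0`) gives `f* ∣ h`, i.e.
`f f* ∣ xⁿ - ε`. Conversely, if `f f* ∣ xⁿ - ε` and `x ∈ D^⊥`, the remainder of `x f*` modulo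
`xⁿ - ε` is a multiple of `f*` of degree `< deg f`, hence zero; so `f f* ∣ x f*` and `f ∣ x`.
-/

namespace R3

def proj₁ : R3 →+* ZMod 3 where
  toFun r := r.a
  map_one' := rfl
  map_mul' _ _ := rfl
  map_zero' := rfl
  map_add' _ _ := rfl

def proj₂ : R3 →+* ZMod 3 where
  toFun r := r.a + r.b + r.c
  map_one' := by simp
  map_mul' x y := by simp only [mul_a, mul_b, mul_c]; ring
  map_zero' := by simp
  map_add' x y := by simp; ring

def proj₃ : R3 →+* ZMod 3 where
  toFun r := r.a + 2 * r.b + r.c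
  map_one' := by simp
  map_mul' x y := by
    simp only [mul_a, mul_b, mul_c]
    linear_combination -(x.b * y.b) * (by decide : (3 : ZMod 3) = 0)
  map_zero' := by simp
  map_add' x y := by simp; ring

lemma e1_eq : e1 = ⟨1, 0, 2⟩ := by decide
lemma e2_eq : e2 = ⟨0, 2, 2⟩ := by decide
lemma e3_eq : e3 = ⟨0, 1, 2⟩ := by decide

@[simp] lemma proj₁_e1 : proj₁ e1 = 1 := by rw [e1_eq]; rfl
@[simp] lemma proj₁_e2 : proj₁ e2 = 0 := by rw [e2_eq]; rfl
@[simp] lemma proj₁_e3 : proj₁ e3 = 0 := by rw [e3_eq]; rfl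
@[simp] lemma proj₂_e1 : proj₂ e1 = 0 := by rw [e1_eq]; rfl
@[simp] lemma proj₂_e2 : proj₂ e2 = 1 := by rw [e2_eq]; rfl
@[simp] lemma proj₂_e3 : proj₂ e3 = 0 := by rw [e3_eq]; rfl
@[simp] lemma proj₃_e1 : proj₃ e1 = 0 := by rw [e1_eq]; rfl
@[simp] lemma proj₃_e2 : proj₃ e2 = 0 := by rw [e2_eq]; rfl
@[simp] lemma proj₃_e3 : proj₃ e3 = 1 := by rw [e3_eq]; rfl

@[simp] lemma proj₁_iota (t : ZMod 3) : proj₁ (iota t) = t := rfl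
@[simp] lemma proj₂_iota (t : ZMod 3) : proj₂ (iota t) = t := by simp [proj₂, iota]
@[simp] lemma proj₃_iota (t : ZMod 3) : proj₃ (iota t) = t := by simp [proj₃, iota]

lemma eq_idempotent_decomposition (r : R3) :
    r = e1 * iota (proj₁ r) + e2 * iota (proj₂ r) + e3 * iota (proj₃ r) := by
  rw [e1_eq, e2_eq, e3_eq]
  ext <;> simp [proj₁, proj₂, proj₃, iota] <;> ring_nf <;> reduce_mod_char

lemma eq_zero_of_proj_eq_zero {r : R3} (h₁ : proj₁ r = 0) (h₂ : proj₂ r = 0) (h₃ : proj₃ r = 0) :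
    r = 0 := by
  rw [eq_idempotent_decomposition r, h₁, h₂, h₃]; simp

end R3

open R3

section Decomposition

variable {n : ℕ}

noncomputable def ofComponents (x y z : Fin n → ZMod 3) : Fin n → R3 :=
  e1 • emb x + e2 • emb y + e3 • emb z

@[simp] lemma proj₁_ofComponents (x y z : Fin n → ZMod 3) (i : Fin n) :
    proj₁ (ofComponents x y z i) = x i := by
  simp [ofComponents, emb]

@[simp] lemma proj₂_ofComponents (x y z : Fin n → ZMod 3) (i : Fin n) :
    proj₂ (ofComponents x y z i) = y i := by
  simp [ofComponents, emb]

@[simp] lemma proj₃_ofComponents (x y z : Fin n → ZMod 3) (i : Fin n) :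
    proj₃ (ofComponents x y z i) = z i := by
  simp [ofComponents, emb]

@[simp] lemma proj₁_comp_ofComponents (x y z : Fin n → ZMod 3) :
    proj₁ ∘ ofComponents x y z = x :=
  funext (proj₁_ofComponents x y z)

@[simp] lemma proj₂_comp_ofComponents (x y z : Fin n → ZMod 3) :
    proj₂ ∘ ofComponents x y z = y :=
  funext (proj₂_ofComponents x y z)

@[simp] lemma proj₃_comp_ofComponents (x y z : Fin n → ZMod 3) :
    proj₃ ∘ ofComponents x y z = z :=
  funext (proj₃_ofComponents x y z)

lemma mem_tri_iff {C₁ C₂ C₃ : Set (Fin n → ZMod 3)} {w : Fin n → R3} :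
    w ∈ tri C₁ C₂ C₃ ↔ proj₁ ∘ w ∈ C₁ ∧ proj₂ ∘ w ∈ C₂ ∧ proj₃ ∘ w ∈ C₃ := by
  constructor
  · rintro ⟨x, hx, y, hy, z, hz, rfl⟩
    rw [← proj₁_comp_ofComponents x y z] at hx
    rw [← proj₂_comp_ofComponents x y z] at hy
    rw [← proj₃_comp_ofComponents x y z] at hz
    exact ⟨hx, hy, hz⟩
  · rintro ⟨h₁, h₂, h₃⟩
    refine ⟨_, h₁, _, h₂, _, h₃, funext fun i => ?_⟩
    simpa [emb] using eq_idempotent_decomposition (w i)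

variable {C : Submodule R3 (Fin n → R3)} {C₁ C₂ C₃ : Submodule (ZMod 3) (Fin n → ZMod 3)}

lemma mem_iff_of_eq_tri (hC : (C : Set (Fin n → R3)) = tri (C₁ : Set (Fin n → ZMod 3)) C₂ C₃)
    {w : Fin n → R3} : w ∈ C ↔ proj₁ ∘ w ∈ C₁ ∧ proj₂ ∘ w ∈ C₂ ∧ proj₃ ∘ w ∈ C₃ := by
  rw [← SetLike.mem_coe, hC, mem_tri_iff]; rfl

lemma mem_dualR_iff (hC : (C : Set (Fin n → R3)) = tri (C₁ : Set (Fin n → ZMod 3)) C₂ C₃)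
    {x : Fin n → R3} :
    x ∈ dualR C ↔ proj₁ ∘ x ∈ dualZ C₁ ∧ proj₂ ∘ x ∈ dualZ C₂ ∧ proj₃ ∘ x ∈ dualZ C₃ := by
  constructor
  · intro hx
    refine ⟨fun y hy => ?_, fun y hy => ?_, fun y hy => ?_⟩
    · have := hx (ofComponents y 0 0) ((mem_iff_of_eq_tri hC).2 (by simpa using hy))
      simpa using congrArg proj₁ this
    · have := hx (ofComponents 0 y 0) ((mem_iff_of_eq_tri hC).2 (by simpa using hy))
      simpa using congrArg proj₂ this
    · have := hx (ofComponents 0 0 y) ((mem_iff_of_eq_tri hC).2 (by simpa using hy))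
      simpa using congrArg proj₃ this
  · rintro ⟨h₁, h₂, h₃⟩ w hw
    obtain ⟨hw₁, hw₂, hw₃⟩ := (mem_iff_of_eq_tri hC).1 hw
    exact eq_zero_of_proj_eq_zero (by simpa using h₁ _ hw₁) (by simpa using h₂ _ hw₂)
      (by simpa using h₃ _ hw₃)

lemma dualR_le_iff (hC : (C : Set (Fin n → R3)) = tri (C₁ : Set (Fin n → ZMod 3)) C₂ C₃) :
    dualR C ≤ C ↔ dualZ C₁ ≤ C₁ ∧ dualZ C₂ ≤ C₂ ∧ dualZ C₃ ≤ C₃ := by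
  constructor
  · intro h
    have mem_C {x} (hx : x ∈ dualR C) := (mem_iff_of_eq_tri hC).1 (h hx)
    refine ⟨fun y hy => ?_, fun y hy => ?_, fun y hy => ?_⟩
    · simpa using (mem_C (x := ofComponents y 0 0) ((mem_dualR_iff hC).2 (by simpa using hy))).1
    · simpa using (mem_C (x := ofComponents 0 y 0) ((mem_dualR_iff hC).2 (by simpa using hy))).2.1
    · simpa using (mem_C (x := ofComponents 0 0 y) ((mem_dualR_iff hC).2 (by simpa using hy))).2.2
  · rintro ⟨h₁, h₂, h₃⟩ x hx
    obtain ⟨hx₁, hx₂, hx₃⟩ := (mem_dualR_iff hC).1 hx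
    exact (mem_iff_of_eq_tri hC).2 ⟨h₁ hx₁, h₂ hx₂, h₃ hx₃⟩

end Decomposition

namespace Polynomial

section Semiring

variable {R : Type*} [Semiring R] {p q : R[X]}

lemma reflect_eq_reverse_mul_X_pow {N : ℕ} (hN : p.natDegree ≤ N) :
    p.reflect N = p.reverse * X ^ (N - p.natDegree) := by
  have := reflect_mul p 1 le_rfl (by simp : (1 : R[X]).natDegree ≤ N - p.natDegree)
  rwa [mul_one, Nat.add_sub_cancel' hN, reflect_one] at this

lemma natDegree_reverse_of_coeff_zero_ne_zero (hp : p.coeff 0 ≠ 0) :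
    p.reverse.natDegree = p.natDegree := by
  rw [reverse_natDegree, natTrailingDegree_eq_zero.2 (Or.inr hp), Nat.sub_zero]

lemma reverse_reverse_of_coeff_zero_ne_zero (hp : p.coeff 0 ≠ 0) : p.reverse.reverse = p := by
  rw [reverse, natDegree_reverse_of_coeff_zero_ne_zero hp, reverse, reflect_reflect]

lemma reverse_reflect_of_coeff_zero_ne_zero {N : ℕ} (hN : p.natDegree ≤ N) (hp : p.coeff 0 ≠ 0) :
    (p.reflect N).reverse = p := by
  rw [reflect_eq_reverse_mul_X_pow hN, reverse_mul_X_pow, reverse_reverse_of_coeff_zero_ne_zero hp]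

lemma reverse_dvd_reverse [NoZeroDivisors R] (h : p ∣ q) : p.reverse ∣ q.reverse := by
  obtain ⟨r, rfl⟩ := h
  exact ⟨r.reverse, reverse_mul_of_domain p r⟩

lemma coeff_mul_eq_zero_of_coeff_eq_zero {d N : ℕ} (hp : ∀ j, d ≤ j → j ≤ N → p.coeff j = 0)
    (hq : q.natDegree + d ≤ N) : (p * q).coeff N = 0 := by
  rw [coeff_mul]
  refine Finset.sum_eq_zero fun ⟨i, j⟩ hij => ?_
  rw [Finset.HasAntidiagonal.mem_antidiagonal] at hij
  dsimp only at hij ⊢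
  by_cases hj : j ≤ q.natDegree
  · rw [hp i (by omega) (by omega), zero_mul]
  · rw [coeff_eq_zero_of_natDegree_lt (p := q) (by omega), mul_zero]

end Semiring

section CommRing

variable {R : Type*} [CommRing R] {n : ℕ} {ε : R}

lemma coeff_zero_ne_zero_of_dvd_X_pow_sub_C {f : R[X]} (hn : n ≠ 0) (hε : ε ≠ 0)
    (hf : f ∣ X ^ n - C ε) : f.coeff 0 ≠ 0 := by
  intro h0
  have := X_dvd_iff.1 ((X_dvd_iff.2 h0).trans hf)
  simp [coeff_X_pow, hn.symm, hε] at this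

lemma coeff_modByMonic_X_pow_sub_C [Nontrivial R] (hn : n ≠ 0) {P : R[X]} {d j : ℕ}
    (hP : P.natDegree < n + d) (hdj : d ≤ j) (hjn : j < n) :
    (P %ₘ (X ^ n - C ε)).coeff j = P.coeff j := by
  have hmonic := monic_X_pow_sub_C ε hn
  have hquot : (P /ₘ (X ^ n - C ε)).coeff j = 0 := by
    by_cases hPn : P.natDegree < n
    · rw [(divByMonic_eq_zero_iff hmonic).2 (degree_lt_degree (by rwa [natDegree_X_pow_sub_C])),
        coeff_zero]
    · apply coeff_eq_zero_of_natDegree_lt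
      rw [natDegree_divByMonic P hmonic, natDegree_X_pow_sub_C]
      omega
  rw [modByMonic_eq_sub_mul_div, coeff_sub, sub_mul, coeff_sub, mul_comm, coeff_mul_X_pow',
    if_neg (by omega), coeff_C_mul, hquot]
  simp

end CommRing

end Polynomial

lemma Ideal.Quotient.mk_mem_span_mk_iff_dvd {A : Type*} [CommRing A] {f g p : A} (hfg : f ∣ g) :
    Ideal.Quotient.mk (Ideal.span {g}) p ∈ Ideal.span {Ideal.Quotient.mk (Ideal.span {g}) f} ↔
      f ∣ p := by
  rw [← Set.image_singleton, ← Ideal.map_span, Ideal.mem_quotient_iff_mem_sup,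
    sup_eq_left.2 (Ideal.span_singleton_le_span_singleton.2 hfg), Ideal.mem_span_singleton]

open Polynomial

section TernaryCode

variable {n : ℕ}

lemma coeff_toPolyZ (c : Fin n → ZMod 3) (k : ℕ) :
    (toPolyZ c).coeff k = if h : k < n then c ⟨k, h⟩ else 0 := by
  simp only [toPolyZ, finsetSum_coeff, coeff_C_mul_X_pow]
  split_ifs with h
  · rw [Finset.sum_eq_single ⟨k, h⟩ (fun i _ hi => if_neg fun e => hi (Fin.ext e.symm))
      (by simp), if_pos rfl]
  · exact Finset.sum_eq_zero fun i _ => if_neg fun (e : k = i) => h (e ▸ i.isLt)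

lemma toPolyZ_injective : Function.Injective (toPolyZ (n := n)) := fun c d h => funext fun i => by
  simpa [coeff_toPolyZ] using congrArg (coeff · i) h

lemma degree_toPolyZ_lt (c : Fin n → ZMod 3) : (toPolyZ c).degree < n := by
  rw [degree_lt_iff_coeff_zero]
  intro m hm
  simp [coeff_toPolyZ, not_lt.2 hm]

lemma natDegree_toPolyZ_lt [NeZero n] (c : Fin n → ZMod 3) : (toPolyZ c).natDegree < n := by
  by_cases hc : toPolyZ c = 0
  · rw [hc, natDegree_zero]; exact Nat.pos_of_neZero n
  · exact (natDegree_lt_iff_degree_lt hc).2 (degree_toPolyZ_lt c)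

def coeffVec (n : ℕ) (p : (ZMod 3)[X]) : Fin n → ZMod 3 := fun i => p.coeff i

lemma toPolyZ_coeffVec {p : (ZMod 3)[X]} (hp : p.natDegree < n) : toPolyZ (coeffVec n p) = p := by
  ext k
  rw [coeff_toPolyZ]
  split_ifs with h
  · rfl
  · exact (coeff_eq_zero_of_natDegree_lt (by omega)).symm

lemma mkZ_toPolyZ_injective [NeZero n] {ε : ZMod 3} {c d : Fin n → ZMod 3}
    (h : mkZ n ε (toPolyZ c) = mkZ n ε (toPolyZ d)) : c = d := by
  have hdvd : X ^ n - C ε ∣ toPolyZ c - toPolyZ d :=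
    Ideal.mem_span_singleton.1 (Ideal.Quotient.eq.1 h)
  refine toPolyZ_injective (sub_eq_zero.1 (eq_zero_of_dvd_of_degree_lt hdvd ?_))
  rw [degree_X_pow_sub_C (Nat.pos_of_neZero n)]
  exact (degree_sub_le _ _).trans_lt (max_lt (degree_toPolyZ_lt c) (degree_toPolyZ_lt d))

lemma sum_mul_eq_coeff_mul_reflect [NeZero n] (x y : Fin n → ZMod 3) :
    ∑ i, x i * y i = (toPolyZ x * (toPolyZ y).reflect (n - 1)).coeff (n - 1) := by
  rw [coeff_mul, Finset.Nat.sum_antidiagonal_eq_sum_range_succ_mk, Nat.succ_eq_add_one,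
    Nat.sub_add_cancel (Nat.one_le_of_lt (Nat.pos_of_neZero n)), ← Fin.sum_univ_eq_sum_range]
  refine Finset.sum_congr rfl fun i _ => ?_
  have hi : (i : ℕ) ≤ n - 1 := Nat.le_sub_one_of_lt i.isLt
  rw [coeff_reflect, revAt_le (Nat.sub_le _ _), Nat.sub_sub_self hi, coeff_toPolyZ, coeff_toPolyZ]
  simp [i.isLt]

variable {ε : ZMod 3} {f : (ZMod 3)[X]}

namespace IsGenPolyZ

lemma mem_iff_dvd [NeZero n] {D : Set (Fin n → ZMod 3)} (hg : IsGenPolyZ n ε D f)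
    {y : Fin n → ZMod 3} : y ∈ D ↔ f ∣ toPolyZ y := by
  obtain ⟨-, hdvd, hset⟩ := hg
  rw [← Ideal.Quotient.mk_mem_span_mk_iff_dvd hdvd]
  change y ∈ D ↔ mkZ n ε (toPolyZ y) ∈ (Ideal.span {mkZ n ε f} : Set _)
  rw [← hset]
  exact ⟨fun hy => ⟨y, hy, rfl⟩, fun ⟨c, hc, hyc⟩ => mkZ_toPolyZ_injective hyc ▸ hc⟩

variable [NeZero n] {D : Submodule (ZMod 3) (Fin n → ZMod 3)}

lemma mem_dualZ_iff (hg : IsGenPolyZ n ε (D : Set (Fin n → ZMod 3)) f) {x : Fin n → ZMod 3} :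
    x ∈ dualZ D ↔ ∀ j, f.natDegree ≤ j → j < n → (toPolyZ x * f.reverse).coeff j = 0 := by
  have hf0 : f ≠ 0 := hg.1.ne_zero
  have hn : 0 < n := Nat.pos_of_neZero n
  constructor
  · intro hx j hdj hjn
    have hdeg : (f * X ^ (j - f.natDegree)).natDegree = j := by
      rw [natDegree_mul_X_pow _ hf0]; omega
    have hy := toPolyZ_coeffVec (n := n) (hdeg ▸ hjn)
    have hyD : coeffVec n (f * X ^ (j - f.natDegree)) ∈ D :=
      hg.mem_iff_dvd.2 (by rw [hy]; exact dvd_mul_right _ _)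
    have hrefl : (f * X ^ (j - f.natDegree)).reflect (n - 1) = f.reverse * X ^ (n - 1 - j) := by
      rw [reflect_eq_reverse_mul_X_pow (by omega), reverse_mul_X_pow, hdeg]
    have := hx _ hyD
    rwa [sum_mul_eq_coeff_mul_reflect, hy, hrefl, ← mul_assoc, coeff_mul_X_pow',
      if_pos (by omega), Nat.sub_sub_self (by omega)] at this
  · intro hcoeff y hy
    obtain ⟨q, hq⟩ := hg.mem_iff_dvd.1 hy
    rw [sum_mul_eq_coeff_mul_reflect, hq]
    rcases eq_or_ne q 0 with rfl | hq0
    · simp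
    have hdeg : f.natDegree + q.natDegree ≤ n - 1 := by
      have := natDegree_toPolyZ_lt y
      rw [hq, natDegree_mul hf0 hq0] at this
      omega
    have hrefl : (f * q).reflect (n - 1) = f.reverse * q.reflect (n - 1 - f.natDegree) := by
      have := reflect_mul f q le_rfl (show q.natDegree ≤ n - 1 - f.natDegree by omega)
      rwa [Nat.add_sub_cancel' (by omega : f.natDegree ≤ n - 1)] at this
    rw [hrefl, ← mul_assoc]
    refine coeff_mul_eq_zero_of_coeff_eq_zero (d := f.natDegree) (N := n - 1)
      (fun j hdj hjn => hcoeff j hdj (by omega)) ?_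
    have := natDegree_reflect_le (N := n - 1 - f.natDegree) (p := q)
    omega

lemma dvd_of_dualZ_le (hg : IsGenPolyZ n ε (D : Set (Fin n → ZMod 3)) f) (hε : ε ≠ 0)
    (h : dualZ D ≤ D) : f * f.reverse ∣ X ^ n - C ε := by
  have hn : 0 < n := Nat.pos_of_neZero n
  obtain ⟨g, hfg⟩ := hg.2.1
  rcases Nat.eq_zero_or_pos f.natDegree with hd | hd
  · simp [hg.1.natDegree_eq_zero.1 hd, ← C_1, -map_one]
  have hg0 : g ≠ 0 := by
    rintro rfl
    exact X_pow_sub_C_ne_zero hn ε (by rw [hfg, mul_zero])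
  have hdeg : f.natDegree + g.natDegree = n := by
    rw [← natDegree_mul hg.1.ne_zero hg0, ← hfg, natDegree_X_pow_sub_C]
  have hx : toPolyZ (coeffVec n (g.reflect (n - 1))) = g.reflect (n - 1) :=
    toPolyZ_coeffVec (natDegree_reflect_le.trans_lt (max_lt (by omega) (by omega)))
  -- times `f*` it is `X ^ (deg f - 1) * (1 - ε Xⁿ)`, which vanishes in degrees `deg f, …, n - 1`
  have hdual : coeffVec n (g.reflect (n - 1)) ∈ dualZ D := by
    rw [hg.mem_dualZ_iff, hx]
    intro j hdj hjn
    rw [reverse, ← reflect_mul g f (by omega) le_rfl, mul_comm g f, ← hfg, coeff_reflect,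
      revAt_le (by omega)]
    simp [coeff_X_pow, coeff_C, show n - 1 + f.natDegree - j ≠ n by omega,
      show n - 1 + f.natDegree - j ≠ 0 by omega]
  have hfg' : f ∣ g.reflect (n - 1) := hx ▸ hg.mem_iff_dvd.1 (h hdual)
  have hg00 : g.coeff 0 ≠ 0 :=
    coeff_zero_ne_zero_of_dvd_X_pow_sub_C hn.ne' hε ⟨f, hfg.trans (mul_comm f g)⟩
  rw [hfg]
  exact mul_dvd_mul_left f
    (reverse_reflect_of_coeff_zero_ne_zero (N := n - 1) (by omega) hg00 ▸
      reverse_dvd_reverse hfg')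

lemma dualZ_le_of_dvd (hg : IsGenPolyZ n ε (D : Set (Fin n → ZMod 3)) f) (hε : ε ≠ 0)
    (h : f * f.reverse ∣ X ^ n - C ε) : dualZ D ≤ D := by
  intro x hx
  have hn : 0 < n := Nat.pos_of_neZero n
  have hmonic : (X ^ n - C ε).Monic := monic_X_pow_sub_C ε hn.ne'
  have hf00 : f.coeff 0 ≠ 0 := coeff_zero_ne_zero_of_dvd_X_pow_sub_C hn.ne' hε hg.2.1
  have hrev0 : f.reverse ≠ 0 := reverse_eq_zero.not.2 hg.1.ne_zero
  set P := toPolyZ x * f.reverse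
  have hP : P.natDegree < n + f.natDegree :=
    natDegree_mul_le.trans_lt
      (add_lt_add_of_lt_of_le (natDegree_toPolyZ_lt x) (reverse_natDegree_le f))
  have hrem_deg : (P %ₘ (X ^ n - C ε)).degree < f.reverse.degree := by
    rw [degree_eq_natDegree hrev0, natDegree_reverse_of_coeff_zero_ne_zero hf00,
      degree_lt_iff_coeff_zero]
    intro j hdj
    by_cases hjn : j < n
    · rw [coeff_modByMonic_X_pow_sub_C hn.ne' hP hdj hjn]
      exact hg.mem_dualZ_iff.1 hx j hdj hjn
    · refine coeff_eq_zero_of_degree_lt ((degree_modByMonic_lt P hmonic).trans_le ?_)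
      rw [degree_X_pow_sub_C hn]
      exact_mod_cast not_lt.1 hjn
  have hrem_dvd : f.reverse ∣ P %ₘ (X ^ n - C ε) := by
    rw [modByMonic_eq_sub_mul_div]
    exact dvd_sub (dvd_mul_left _ _) (((dvd_mul_left _ _).trans h).mul_right _)
  have hP_dvd : X ^ n - C ε ∣ P :=
    (modByMonic_eq_zero_iff_dvd hmonic).1 (eq_zero_of_dvd_of_degree_lt hrem_dvd hrem_deg)
  exact hg.mem_iff_dvd.2 ((mul_dvd_mul_iff_right hrev0).1 (h.trans hP_dvd))

lemma dualZ_le_iff_dvd (hg : IsGenPolyZ n ε (D : Set (Fin n → ZMod 3)) f)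
    (hε : ε ≠ 0) : dualZ D ≤ D ↔ f * f.reverse ∣ X ^ n - C ε :=
  ⟨hg.dvd_of_dualZ_le hε, hg.dualZ_le_of_dvd hε⟩

end IsGenPolyZ

end TernaryCode

theorem statement15_general (n : ℕ) [NeZero n] (ε : ZMod 3) (hε : ε = 1 ∨ ε = -1)
    (C : Submodule R3 (Fin n → R3))
    (C₁ C₂ C₃ : Submodule (ZMod 3) (Fin n → ZMod 3))
    (f₁ f₂ f₃ : Polynomial (ZMod 3))
    (hg₁ : IsGenPolyZ n ε (C₁ : Set (Fin n → ZMod 3)) f₁)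
    (hg₂ : IsGenPolyZ n ε (C₂ : Set (Fin n → ZMod 3)) f₂)
    (hg₃ : IsGenPolyZ n ε (C₃ : Set (Fin n → ZMod 3)) f₃)
    (hC : (C : Set (Fin n → R3)) = tri (C₁ : Set (Fin n → ZMod 3)) C₂ C₃) :
    (dualR C ≤ C ↔
      (f₁ * f₁.reverse ∣ (Polynomial.X ^ n - Polynomial.C ε) ∧
       f₂ * f₂.reverse ∣ (Polynomial.X ^ n - Polynomial.C ε) ∧
       f₃ * f₃.reverse ∣ (Polynomial.X ^ n - Polynomial.C ε))) ∧
    (dualR C ≤ C ↔ (dualZ C₁ ≤ C₁ ∧ dualZ C₂ ≤ C₂ ∧ dualZ C₃ ≤ C₃)) := by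
  have hε0 : ε ≠ 0 := by rcases hε with rfl | rfl <;> decide
  have hsplit := dualR_le_iff hC
  exact ⟨hsplit.trans (and_congr (hg₁.dualZ_le_iff_dvd hε0)
    (and_congr (hg₂.dualZ_le_iff_dvd hε0) (hg₃.dualZ_le_iff_dvd hε0))), hsplit⟩

/-- Let `C = ⟨(1+2v²)f₁, (2v+2v²)f₂, (v+2v²)f₃⟩` be a cyclic (`ε = 1`)
resp. negacyclic (`ε = -1`) code of length `n` over `R`, where `fᵢ` is the generator
polynomial of the associated ternary code `Cᵢ`. Then `C^⊥ ⊆ C` iff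
`xⁿ - ε ≡ 0 (mod fᵢ·fᵢ*)` for `i = 1, 2, 3`; equivalently, `C^⊥ ⊆ C` iff
`Cᵢ^⊥ ⊆ Cᵢ` for `i = 1, 2, 3`. -/
theorem statement15 (n : ℕ) [NeZero n] (ε : ZMod 3) (hε : ε = 1 ∨ ε = -1)
    (C : Submodule R3 (Fin n → R3))
    (C₁ C₂ C₃ : Submodule (ZMod 3) (Fin n → ZMod 3))
    (f₁ f₂ f₃ : Polynomial (ZMod 3))
    (hg₁ : IsGenPolyZ n ε (C₁ : Set (Fin n → ZMod 3)) f₁)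
    (hg₂ : IsGenPolyZ n ε (C₂ : Set (Fin n → ZMod 3)) f₂)
    (hg₃ : IsGenPolyZ n ε (C₃ : Set (Fin n → ZMod 3)) f₃)
    (hC : (C : Set (Fin n → R3)) = tri (C₁ : Set (Fin n → ZMod 3)) C₂ C₃)
    (hShift : consta (R3.iota ε) '' (C : Set (Fin n → R3)) = (C : Set (Fin n → R3))) :
    (dualR C ≤ C ↔
      (f₁ * f₁.reverse ∣ (Polynomial.X ^ n - Polynomial.C ε) ∧
       f₂ * f₂.reverse ∣ (Polynomial.X ^ n - Polynomial.C ε) ∧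
       f₃ * f₃.reverse ∣ (Polynomial.X ^ n - Polynomial.C ε))) ∧
    (dualR C ≤ C ↔ (dualZ C₁ ≤ C₁ ∧ dualZ C₂ ≤ C₂ ∧ dualZ C₃ ≤ C₃)) :=
  statement15_general n ε hε C C₁ C₂ C₃ f₁ f₂ f₃ hg₁ hg₂ hg₃ hC
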